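/- arXiv:2403.00202 — 2 statements merged into one kernel-verified Lean document; each statement's English description precedes it below -/
import Mathlib

section
/- (Proposition 3.4, general case) Let Z take values in E = {1,...,K} with P(Z = z) > 0 for all z, and conditionally on Z = z let X₁,...,X_p be independent with means μ_i(z) and variances at most σ_max². Let Ẑ = argmin_z ‖X_{1:p} − μ̌(z)‖₂ for fixed vectors μ̌(z) ∈ ℝᵖ with all relative errors R_{z,v} ≤ 1/10. Then P(Ẑ ≠ Z) ≤ 25·K·σ_max² / sep(p), where sep(p) = min_{z≠v} ‖μ(z) − μ(v)‖₂². -/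
/-!
Conditionally on `Z = z`, the label `v ≠ z` can only be chosen when `X` is at least as close to
`mc v` as to `mc z`. As `‖x - c₂‖ ^ 2 - ‖x - c₁‖ ^ 2` is affine in `x`, this is the half-space event
`⟪X - m z, mc z - mc v⟫ ≤ -t`, and relative errors at most `1 / 10` give the margin
`t = 2 / 5 * ‖m z - m v‖ ^ 2` and `‖mc z - mc v‖ ≤ 6 / 5 * ‖m z - m v‖`. By independence the linear
statistic `⟪X, mc z - mc v⟫` has variance at most `σ ^ 2 * ‖mc z - mc v‖ ^ 2`, so Chebyshev bounds
the event by `9 * σ ^ 2 / ‖m z - m v‖ ^ 2`. A union bound over the `K - 1` wrong labels, averaged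
over `z`, concludes.
-/
open MeasureTheory ProbabilityTheory Finset
open scoped InnerProductSpace ENNReal

section Geometry

lemma norm_sub_le_of_norm_sub_le_one_div_ten {E : Type*} [SeminormedAddCommGroup E]
    {m₁ m₂ c₁ c₂ : E} (h₁ : ‖m₁ - c₁‖ ≤ 1 / 10 * ‖m₁ - m₂‖)
    (h₂ : ‖m₂ - c₂‖ ≤ 1 / 10 * ‖m₂ - m₁‖) :
    ‖c₁ - c₂‖ ≤ 6 / 5 * ‖m₁ - m₂‖ := by
  rw [norm_sub_rev m₂ m₁] at h₂
  calc ‖c₁ - c₂‖ = ‖(m₁ - m₂) + -(m₁ - c₁) + (m₂ - c₂)‖ := by congr 1; abel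
    _ ≤ ‖m₁ - m₂‖ + ‖m₁ - c₁‖ + ‖m₂ - c₂‖ := norm_add₃_le.trans (by rw [norm_neg])
    _ ≤ 6 / 5 * ‖m₁ - m₂‖ := by linarith

variable {F : Type*} [NormedAddCommGroup F] [InnerProductSpace ℝ F]

lemma norm_sub_sq_sub_norm_sub_sq (x m c₁ c₂ : F) :
    ‖x - c₂‖ ^ 2 - ‖x - c₁‖ ^ 2 = ‖m - c₂‖ ^ 2 - ‖m - c₁‖ ^ 2 + 2 * ⟪x - m, c₁ - c₂⟫_ℝ := by
  have h (c : F) : ‖x - c‖ ^ 2 = ‖x - m‖ ^ 2 + 2 * ⟪x - m, m - c⟫_ℝ + ‖m - c‖ ^ 2 := by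
    rw [← norm_add_sq_real, sub_add_sub_cancel]
  rw [h c₁, h c₂, show c₁ - c₂ = (m - c₂) - (m - c₁) by abel, inner_sub_right (x - m) (m - c₂)]
  ring

lemma inner_sub_le_of_norm_sub_sq_le {m₁ m₂ c₁ c₂ : F} (h₁ : ‖m₁ - c₁‖ ≤ 1 / 10 * ‖m₁ - m₂‖)
    (h₂ : ‖m₂ - c₂‖ ≤ 1 / 10 * ‖m₂ - m₁‖) {x : F} (hx : ‖x - c₂‖ ^ 2 ≤ ‖x - c₁‖ ^ 2) :
    ⟪x - m₁, c₁ - c₂⟫_ℝ ≤ -(2 / 5 * ‖m₁ - m₂‖ ^ 2) := by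
  have hfar : 9 / 10 * ‖m₁ - m₂‖ ≤ ‖m₁ - c₂‖ := by
    have := norm_sub_norm_le (m₁ - m₂) (c₂ - m₂)
    rw [sub_sub_sub_cancel_right, norm_sub_rev c₂ m₂] at this
    rw [norm_sub_rev m₂ m₁] at h₂
    linarith
  have := norm_sub_sq_sub_norm_sub_sq x m₁ c₁ c₂
  nlinarith [norm_nonneg (m₁ - c₁), norm_nonneg (m₁ - m₂)]

end Geometry

section Chebyshev

variable {Ω ι : Type*} [MeasurableSpace Ω] [Fintype ι] {ν : Measure Ω} {X : ι → Ω → ℝ}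

lemma variance_sum_mul_le (hindep : iIndepFun X ν) (hL2 : ∀ i, MemLp (X i) 2 ν) {s : ℝ}
    (hvar : ∀ i, variance (X i) ν ≤ s) (d : ι → ℝ) :
    variance (fun ω => ∑ i, d i * X i ω) ν ≤ s * ∑ i, d i ^ 2 := by
  have hsum : (fun ω => ∑ i, d i * X i ω) = ∑ i, fun ω => d i * X i ω := by
    ext ω; simp
  rw [hsum, IndepFun.variance_sum (fun i _ => (hL2 i).const_mul (d i))
    fun i _ j _ hij => (hindep.indepFun hij).comp (measurable_const_mul _) (measurable_const_mul _),
    mul_sum]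
  gcongr with i
  rw [variance_const_mul, mul_comm s]
  exact mul_le_mul_of_nonneg_left (hvar i) (sq_nonneg _)

lemma measure_inner_sub_le_neg_le [IsFiniteMeasure ν] (hindep : iIndepFun X ν)
    (hL2 : ∀ i, MemLp (X i) 2 ν) {s : ℝ} (hvar : ∀ i, variance (X i) ν ≤ s)
    {m : EuclideanSpace ℝ ι} (hmean : ∀ i, ∫ ω, X i ω ∂ν = m i) (d : EuclideanSpace ℝ ι)
    {t : ℝ} (ht : 0 < t) :
    ν {ω | ⟪WithLp.toLp 2 (X · ω) - m, d⟫_ℝ ≤ -t} ≤ ENNReal.ofReal (s * ‖d‖ ^ 2 / t ^ 2) := by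
  set Y : Ω → ℝ := fun ω => ∑ i, d i * X i ω
  have hY : MemLp Y 2 ν := memLp_finsetSum _ fun i _ => (hL2 i).const_mul (d i)
  have hEY : ν[Y] = ⟪m, d⟫_ℝ := by
    rw [integral_finsetSum _ fun i _ => ((hL2 i).integrable one_le_two).const_mul (d i)]
    simp [PiLp.inner_apply, integral_const_mul, hmean]
  have hinner (ω : Ω) : ⟪WithLp.toLp 2 (X · ω) - m, d⟫_ℝ = Y ω - ν[Y] := by
    simp [hEY, inner_sub_left, PiLp.inner_apply, Y]
  calc ν {ω | ⟪WithLp.toLp 2 (X · ω) - m, d⟫_ℝ ≤ -t}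
      ≤ ν {ω | t ≤ |Y ω - ν[Y]|} := by
        refine measure_mono fun ω (hω : _ ≤ -t) => ?_
        rw [hinner] at hω
        show t ≤ |Y ω - ν[Y]|
        linarith [neg_abs_le (Y ω - ν[Y])]
    _ ≤ ENNReal.ofReal (variance Y ν / t ^ 2) := meas_ge_le_variance_div_sq hY ht
    _ ≤ ENNReal.ofReal (s * ‖d‖ ^ 2 / t ^ 2) := by
        rw [EuclideanSpace.real_norm_sq_eq]
        gcongr
        exact variance_sum_mul_le hindep hL2 hvar d

theorem measure_norm_sub_sq_le_norm_sub_sq_le [IsFiniteMeasure ν] (hindep : iIndepFun X ν)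
    (hL2 : ∀ i, MemLp (X i) 2 ν) {σ : ℝ} (hvar : ∀ i, variance (X i) ν ≤ σ ^ 2)
    {m₁ m₂ c₁ c₂ : EuclideanSpace ℝ ι} (hmean : ∀ i, ∫ ω, X i ω ∂ν = m₁ i) (hm : m₁ ≠ m₂)
    (h₁ : ‖m₁ - c₁‖ ≤ 1 / 10 * ‖m₁ - m₂‖) (h₂ : ‖m₂ - c₂‖ ≤ 1 / 10 * ‖m₂ - m₁‖) :
    ν {ω | ‖WithLp.toLp 2 (X · ω) - c₂‖ ^ 2 ≤ ‖WithLp.toLp 2 (X · ω) - c₁‖ ^ 2} ≤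
      ENNReal.ofReal (9 * σ ^ 2 / ‖m₁ - m₂‖ ^ 2) := by
  have hm_pos : 0 < ‖m₁ - m₂‖ := norm_pos_iff.2 (sub_ne_zero.2 hm)
  calc _ ≤ ν {ω | ⟪WithLp.toLp 2 (X · ω) - m₁, c₁ - c₂⟫_ℝ ≤ -(2 / 5 * ‖m₁ - m₂‖ ^ 2)} :=
        measure_mono fun ω => inner_sub_le_of_norm_sub_sq_le h₁ h₂
    _ ≤ ENNReal.ofReal (σ ^ 2 * ‖c₁ - c₂‖ ^ 2 / (2 / 5 * ‖m₁ - m₂‖ ^ 2) ^ 2) :=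
        measure_inner_sub_le_neg_le hindep hL2 hvar hmean _ (by positivity)
    _ ≤ ENNReal.ofReal (σ ^ 2 * (6 / 5 * ‖m₁ - m₂‖) ^ 2 / (2 / 5 * ‖m₁ - m₂‖ ^ 2) ^ 2) := by
        gcongr
        exact norm_sub_le_of_norm_sub_le_one_div_ten h₁ h₂
    _ = ENNReal.ofReal (9 * σ ^ 2 / ‖m₁ - m₂‖ ^ 2) := by
        congr 1
        field_simp
        ring

end Chebyshev

theorem measure_ne_le_card_sub_one_mul {Ω α : Type*} [MeasurableSpace Ω] [Fintype α]
    [MeasurableSpace α] [MeasurableSingletonClass α] {μ : Measure Ω} [IsProbabilityMeasure μ]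
    {Z Zh : Ω → α} (hZ : Measurable Z) {E : α → α → Set Ω} {c : ℝ≥0∞}
    (hc : ∀ z v, z ≠ v → μ[E z v | Z ⁻¹' {z}] ≤ c) (hE : ∀ ω, Zh ω ≠ Z ω → ω ∈ E (Z ω) (Zh ω)) :
    μ {ω | Zh ω ≠ Z ω} ≤ (Fintype.card α - 1 : ℕ) * c := by
  classical
  have hfiber (z : α) : MeasurableSet (Z ⁻¹' {z}) := hZ (measurableSet_singleton z)
  calc μ {ω | Zh ω ≠ Z ω}
      ≤ μ (⋃ z, ⋃ v ∈ univ.erase z, Z ⁻¹' {z} ∩ E z v) := by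
        refine measure_mono fun ω hω => ?_
        simp only [Set.mem_iUnion]
        exact ⟨Z ω, Zh ω, mem_erase.2 ⟨hω, mem_univ _⟩, rfl, hE ω hω⟩
    _ ≤ ∑ z, ∑ v ∈ univ.erase z, μ (Z ⁻¹' {z} ∩ E z v) :=
        (measure_iUnion_fintype_le _ _).trans (sum_le_sum fun z _ => measure_biUnion_finset_le _ _)
    _ = ∑ z, ∑ v ∈ univ.erase z, μ[E z v | Z ⁻¹' {z}] * μ (Z ⁻¹' {z}) := by
        simp only [cond_mul_eq_inter (hfiber _)]
    _ ≤ ∑ z, ∑ v ∈ univ.erase z, c * μ (Z ⁻¹' {z}) := by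
        gcongr with z _ v hv
        exact hc z v (ne_of_mem_erase hv).symm
    _ = (Fintype.card α - 1 : ℕ) * c * ∑ z, μ (Z ⁻¹' {z}) := by
        simp [card_erase_of_mem, mul_sum, mul_assoc]
    _ = (Fintype.card α - 1 : ℕ) * c := by
        rw [sum_measure_preimage_singleton _ fun z _ => hfiber z, coe_univ, Set.preimage_univ,
          measure_univ, mul_one]

lemma sInf_le_sum_sub_sq {α ι : Type*} [Fintype ι] (m : α → ι → ℝ) {z v : α} (hzv : z ≠ v) :
    sInf {s : ℝ | ∃ z v : α, z ≠ v ∧ s = ∑ i, (m z i - m v i) ^ 2} ≤ ∑ i, (m z i - m v i) ^ 2 := by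
  refine csInf_le ⟨0, ?_⟩ ⟨z, v, hzv, rfl⟩
  rintro _ ⟨_, _, -, rfl⟩
  exact sum_nonneg fun i _ => sq_nonneg _

lemma norm_toLp_sub_toLp {ι : Type*} [Fintype ι] (a b : ι → ℝ) :
    ‖(WithLp.toLp 2 a : EuclideanSpace ℝ ι) - WithLp.toLp 2 b‖ = √(∑ i, (a i - b i) ^ 2) := by
  simp [EuclideanSpace.norm_eq]

theorem mislabeling_rate_bound_chebyshev_general {Ω : Type*} [MeasurableSpace Ω]
    (μ : Measure Ω) [IsProbabilityMeasure μ] (K : ℕ)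
    (Z : Ω → Fin K) (hZ : Measurable Z)
    (p : ℕ) (X : Fin p → Ω → ℝ)
    (m mc : Fin K → Fin p → ℝ) (σmax : ℝ)
    (hindep : ∀ z, iIndepFun X (μ[|Z ⁻¹' {z}]))
    (hL2 : ∀ z i, MemLp (X i) 2 (μ[|Z ⁻¹' {z}]))
    (hmean : ∀ z i, ∫ ω, X i ω ∂(μ[|Z ⁻¹' {z}]) = m z i)
    (hvar : ∀ z i, variance (X i) (μ[|Z ⁻¹' {z}]) ≤ σmax ^ 2)
    (sep : ℝ)
    (hsep : sep = sInf {s : ℝ | ∃ z v : Fin K, z ≠ v ∧ s = ∑ i, (m z i - m v i) ^ 2})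
    (hseppos : 0 < sep)
    (hR : ∀ z v : Fin K, z ≠ v →
      Real.sqrt (∑ i, (m z i - mc z i) ^ 2) ≤
        (1 / 10) * Real.sqrt (∑ i, (m z i - m v i) ^ 2))
    (Zh : Ω → Fin K)
    (hargmin : ∀ ω (v : Fin K),
      ∑ i, (X i ω - mc (Zh ω) i) ^ 2 ≤ ∑ i, (X i ω - mc v i) ^ 2) :
    (μ {ω | Zh ω ≠ Z ω}).toReal ≤ 25 * K * σmax ^ 2 / sep := by
  let e : (Fin p → ℝ) → EuclideanSpace ℝ (Fin p) := WithLp.toLp 2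
  have hnorm (a b : Fin p → ℝ) : ‖e a - e b‖ = √(∑ i, (a i - b i) ^ 2) := norm_toLp_sub_toLp a b
  have hnorm_sq (a b : Fin p → ℝ) : ‖e a - e b‖ ^ 2 = ∑ i, (a i - b i) ^ 2 := by
    rw [hnorm, Real.sq_sqrt (sum_nonneg fun i _ => sq_nonneg _)]
  have hsep_le {z v : Fin K} (hzv : z ≠ v) : sep ≤ ‖e (m z) - e (m v)‖ ^ 2 := by
    rw [hsep, hnorm_sq]
    exact sInf_le_sum_sub_sq m hzv
  have hpair (z v : Fin K) (hzv : z ≠ v) :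
      μ[{ω | ‖e (X · ω) - e (mc v)‖ ^ 2 ≤ ‖e (X · ω) - e (mc z)‖ ^ 2} | Z ⁻¹' {z}] ≤
        ENNReal.ofReal (9 * σmax ^ 2 / sep) := by
    have hm : e (m z) ≠ e (m v) := fun h => (hseppos.trans_le (hsep_le hzv)).ne' (by simp [h])
    refine (measure_norm_sub_sq_le_norm_sub_sq_le (hindep z) (hL2 z) (hvar z) (hmean z) hm
      (by simpa only [hnorm] using hR z v hzv)
      (by simpa only [hnorm] using hR v z hzv.symm)).trans ?_
    gcongr
    exact hsep_le hzv
  have hmis : μ {ω | Zh ω ≠ Z ω} ≤ (K - 1 : ℕ) * ENNReal.ofReal (9 * σmax ^ 2 / sep) := by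
    refine (measure_ne_le_card_sub_one_mul hZ hpair fun ω _ => ?_).trans_eq
      (by rw [Fintype.card_fin])
    show (_ : ℝ) ≤ _
    simpa only [hnorm_sq] using hargmin ω (Z ω)
  refine ENNReal.toReal_le_of_le_ofReal (by positivity) (hmis.trans ?_)
  rw [← ENNReal.ofReal_natCast, ← ENNReal.ofReal_mul (Nat.cast_nonneg _)]
  gcongr
  have hK : ((K - 1 : ℕ) : ℝ) ≤ K := Nat.cast_le.2 (Nat.sub_le K 1)
  rw [mul_div_assoc', div_le_div_iff_of_pos_right hseppos]
  nlinarith [sq_nonneg σmax]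

theorem mislabeling_rate_bound_chebyshev {Ω : Type*} [MeasurableSpace Ω]
    (μ : Measure Ω) [IsProbabilityMeasure μ] (K : ℕ)
    (Z : Ω → Fin K) (hZ : Measurable Z) (hzpos : ∀ z, μ (Z ⁻¹' {z}) ≠ 0)
    (p : ℕ) (X : Fin p → Ω → ℝ) (hX : ∀ i, Measurable (X i))
    (m mc : Fin K → Fin p → ℝ) (σmax : ℝ)
    (hindep : ∀ z, iIndepFun X (μ[|Z ⁻¹' {z}]))
    (hL2 : ∀ z i, MemLp (X i) 2 (μ[|Z ⁻¹' {z}]))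
    (hmean : ∀ z i, ∫ ω, X i ω ∂(μ[|Z ⁻¹' {z}]) = m z i)
    (hvar : ∀ z i, variance (X i) (μ[|Z ⁻¹' {z}]) ≤ σmax ^ 2)
    (sep : ℝ)
    (hsep : sep = sInf {s : ℝ | ∃ z v : Fin K, z ≠ v ∧ s = ∑ i, (m z i - m v i) ^ 2})
    (hseppos : 0 < sep)
    (hR : ∀ z v : Fin K, z ≠ v →
      Real.sqrt (∑ i, (m z i - mc z i) ^ 2) ≤
        (1 / 10) * Real.sqrt (∑ i, (m z i - m v i) ^ 2))
    (Zh : Ω → Fin K) (hZh : Measurable Zh)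
    (hargmin : ∀ ω (v : Fin K),
      ∑ i, (X i ω - mc (Zh ω) i) ^ 2 ≤ ∑ i, (X i ω - mc v i) ^ 2) :
    (μ {ω | Zh ω ≠ Z ω}).toReal ≤ 25 * K * σmax ^ 2 / sep :=
  mislabeling_rate_bound_chebyshev_general μ K Z hZ p X m mc σmax hindep hL2 hmean hvar sep hsep
    hseppos hR Zh hargmin
end

section
/- (Binary regressor weights) Let X ∈ {0,1} and Y be square-integrable, Z a random variable, π(Z) = P(X = 1 | Z) with E[π(Z)(1−π(Z))] > 0, and b_x(Z) = E[Y | X = x, Z] for x ∈ {0,1}. Then E[Cov[X, Y | Z]]/E[Var[X | Z]] = E[w(Z)(b₁(Z) − b₀(Z))] where w(Z) = π(Z)(1−π(Z))/E[π(Z)(1−π(Z))]. -/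
/-!
Conditioning on `Z` and then on `(X, Z)`, the expected conditional covariance is
`E[(X - π) Y] = E[(X - π) E[Y | X, Z]]`. Since `X ∈ {0, 1}`, the partially linear
regression `(b₁ - b₀) X + b₀` equals `b₁` on `{X = 1}` and `b₀` on `{X = 0}`, so
`(X - π) E[Y | X, Z] = (1 - π) b₁ X - π b₀ (1 - X)`, whose expectation is
`E[(1 - π) b₁ π - π b₀ (1 - π)] = E[π (1 - π) (b₁ - b₀)]`. The same computation with `Y = X`
gives `E[Var[X | Z]] = E[π (1 - π)]`.
-/

open MeasureTheory

/-- Conditional covariance `Cov[X, Y | m] = E[(X - E[X|m])(Y - E[Y|m]) | m]`. -/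
noncomputable def condCov {Ω : Type*} [MeasurableSpace Ω] (μ : Measure Ω)
    (m : MeasurableSpace Ω) (X Y : Ω → ℝ) : Ω → ℝ :=
  μ[(fun ω => (X ω - (μ[X|m]) ω) * (Y ω - (μ[Y|m]) ω))|m]

/-- Conditional variance `Var[X | m]`. -/
noncomputable def condVar {Ω : Type*} [MeasurableSpace Ω] (μ : Measure Ω)
    (m : MeasurableSpace Ω) (X : Ω → ℝ) : Ω → ℝ :=
  μ[(fun ω => (X ω - (μ[X|m]) ω) ^ 2)|m]

section ConditionalMoments

variable {Ω : Type*} {m m' m₀ : MeasurableSpace Ω} {μ : Measure Ω}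

section CondExp

variable {f g : Ω → ℝ}

theorem integrable_mul_condExp_of_stronglyMeasurable (hg : StronglyMeasurable[m] g)
    (hgf : Integrable (fun ω => g ω * f ω) μ) (hf : Integrable f μ) :
    Integrable (fun ω => g ω * (μ[f|m]) ω) μ :=
  integrable_condExp.congr (condExp_mul_of_stronglyMeasurable_left hg hgf hf)

theorem integral_mul_condExp_of_stronglyMeasurable (hm : m ≤ m₀) [SigmaFinite (μ.trim hm)]
    (hg : StronglyMeasurable[m] g) (hgf : Integrable (fun ω => g ω * f ω) μ)
    (hf : Integrable f μ) :
    ∫ ω, g ω * (μ[f|m]) ω ∂μ = ∫ ω, g ω * f ω ∂μ := by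
  rw [← integral_condExp hm (f := fun ω => g ω * f ω)]
  exact integral_congr_ae (condExp_mul_of_stronglyMeasurable_left hg hgf hf).symm

theorem MeasureTheory.Integrable.mul_of_ae_mem_Icc (hg : Integrable g μ)
    (hf : AEStronglyMeasurable f μ) (hf01 : ∀ᵐ ω ∂μ, f ω ∈ Set.Icc 0 1) :
    Integrable (fun ω => f ω * g ω) μ :=
  hg.bdd_mul hf <| hf01.mono fun _ h => by
    rw [Real.norm_eq_abs, abs_le]
    exact ⟨by linarith [h.1], h.2⟩

theorem condExp_one_sub [IsFiniteMeasure μ] (hm : m ≤ m₀) (hf : Integrable f μ) :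
    μ[fun ω => 1 - f ω|m] =ᵐ[μ] fun ω => 1 - (μ[f|m]) ω := by
  filter_upwards [condExp_sub (integrable_const (1 : ℝ)) hf m] with ω hω
  rw [Pi.sub_def, condExp_const hm] at hω
  exact hω

theorem ae_mem_Icc_condExp [IsFiniteMeasure μ] (hm : m ≤ m₀) (hf : Integrable f μ)
    (hf01 : ∀ᵐ ω ∂μ, f ω ∈ Set.Icc 0 1) :
    ∀ᵐ ω ∂μ, (μ[f|m]) ω ∈ Set.Icc 0 1 := by
  have h0 : 0 ≤ᵐ[μ] μ[f|m] := condExp_nonneg (hf01.mono fun _ h => h.1)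
  have h1 : μ[f|m] ≤ᵐ[μ] μ[fun _ => (1 : ℝ)|m] :=
    condExp_mono hf (integrable_const 1) (hf01.mono fun _ h => h.2)
  rw [condExp_const hm] at h1
  filter_upwards [h0, h1] with ω h0 h1 using ⟨h0, h1⟩

end CondExp

section CondCov

variable {X Y : Ω → ℝ}

theorem condVar_eq_condCov_self : condVar μ m X = condCov μ m X X := by
  simp only [condVar, condCov, sq]

theorem integral_condCov [IsFiniteMeasure μ] (hm : m ≤ m₀) (hX : MemLp X 2 μ)
    (hY : MemLp Y 2 μ) :
    ∫ ω, condCov μ m X Y ω ∂μ = ∫ ω, (X ω - (μ[X|m]) ω) * Y ω ∂μ := by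
  have hEX : MemLp (μ[X|m]) 2 μ := hX.condExp one_le_two
  have hEY : MemLp (μ[Y|m]) 2 μ := hY.condExp one_le_two
  have hXY : Integrable (fun ω => (X ω - (μ[X|m]) ω) * Y ω) μ := (hX.sub hEX).integrable_mul hY
  have hEYX : Integrable (fun ω => (μ[Y|m]) ω * X ω) μ := hEY.integrable_mul hX
  have hEYEX : Integrable (fun ω => (μ[Y|m]) ω * (μ[X|m]) ω) μ := hEY.integrable_mul hEX
  have hEY_sub : Integrable (fun ω => (μ[Y|m]) ω * X ω - (μ[Y|m]) ω * (μ[X|m]) ω) μ :=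
    hEYX.sub hEYEX
  have hcross : ∫ ω, (μ[Y|m]) ω * (μ[X|m]) ω ∂μ = ∫ ω, (μ[Y|m]) ω * X ω ∂μ :=
    integral_mul_condExp_of_stronglyMeasurable hm stronglyMeasurable_condExp hEYX
      (hX.integrable one_le_two)
  calc ∫ ω, condCov μ m X Y ω ∂μ
      = ∫ ω, ((X ω - (μ[X|m]) ω) * Y ω
          - ((μ[Y|m]) ω * X ω - (μ[Y|m]) ω * (μ[X|m]) ω)) ∂μ := by
        rw [condCov, integral_condExp hm]
        congr 1 with ω
        ring
    _ = ∫ ω, (X ω - (μ[X|m]) ω) * Y ω ∂μ := by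
        rw [integral_sub hXY hEY_sub, integral_sub hEYX hEYEX, hcross, sub_self,
          sub_zero]

theorem integral_condVar [IsFiniteMeasure μ] (hm : m ≤ m₀) (hX : MemLp X 2 μ) :
    ∫ ω, condVar μ m X ω ∂μ = ∫ ω, (X ω - (μ[X|m]) ω) * X ω ∂μ := by
  rw [condVar_eq_condCov_self, integral_condCov hm hX hX]

end CondCov

section Binary

variable [IsFiniteMeasure μ] {X : Ω → ℝ}

theorem memLp_of_binary (hX : AEStronglyMeasurable X μ) (hXbin : ∀ ω, X ω = 0 ∨ X ω = 1)
    (p : ENNReal) : MemLp X p μ :=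
  MemLp.of_bound hX 1 <| .of_forall fun ω => by rcases hXbin ω with h | h <;> simp [h]

theorem integral_condVar_of_binary (hm : m ≤ m₀) (hX : AEStronglyMeasurable X μ)
    (hXbin : ∀ ω, X ω = 0 ∨ X ω = 1) :
    ∫ ω, condVar μ m X ω ∂μ = ∫ ω, (μ[X|m]) ω * (1 - (μ[X|m]) ω) ∂μ := by
  have hX2 : MemLp X 2 μ := memLp_of_binary hX hXbin 2
  have h1π : MemLp (fun ω => 1 - (μ[X|m]) ω) 2 μ := (memLp_const 1).sub (hX2.condExp one_le_two)
  calc ∫ ω, condVar μ m X ω ∂μ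
      = ∫ ω, (1 - (μ[X|m]) ω) * X ω ∂μ := by
        rw [integral_condVar hm hX2]
        congr 1 with ω
        rcases hXbin ω with h | h <;> simp [h]
    _ = ∫ ω, (1 - (μ[X|m]) ω) * (μ[X|m]) ω ∂μ :=
        (integral_mul_condExp_of_stronglyMeasurable hm
          (stronglyMeasurable_const.sub stronglyMeasurable_condExp) (h1π.integrable_mul hX2)
          (hX2.integrable one_le_two)).symm
    _ = ∫ ω, (μ[X|m]) ω * (1 - (μ[X|m]) ω) ∂μ := by simp only [mul_comm]

theorem integral_mul_partiallyLinear_of_binary (hm : m ≤ m₀) {β₀ β₁ : Ω → ℝ}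
    (hX : AEStronglyMeasurable X μ) (hXbin : ∀ ω, X ω = 0 ∨ X ω = 1)
    (hβ₀ : StronglyMeasurable[m] β₀) (hβ₁ : StronglyMeasurable[m] β₁)
    (hW : Integrable (fun ω => (β₁ ω - β₀ ω) * X ω + β₀ ω) μ) :
    ∫ ω, (X ω - (μ[X|m]) ω) * ((β₁ ω - β₀ ω) * X ω + β₀ ω) ∂μ =
      ∫ ω, (μ[X|m]) ω * (1 - (μ[X|m]) ω) * (β₁ ω - β₀ ω) ∂μ := by
  set π := μ[X|m]
  have hXint : Integrable X μ := (memLp_of_binary hX hXbin 1).integrable le_rfl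
  have h1Xint : Integrable (fun ω => 1 - X ω) μ := (integrable_const 1).sub hXint
  have hπ : StronglyMeasurable[m] π := stronglyMeasurable_condExp
  have hX01 : ∀ ω, X ω ∈ Set.Icc (0 : ℝ) 1 := fun ω => by
    rcases hXbin ω with h | h <;> simp [h]
  have hπ01 : ∀ᵐ ω ∂μ, π ω ∈ Set.Icc 0 1 := ae_mem_Icc_condExp hm hXint (.of_forall hX01)
  -- `β₁ X` and `β₀ (1 - X)` are `X` and `1 - X` times the integrable `(β₁ - β₀) X + β₀`,
  -- whereas `β₀ X` alone need not be integrable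
  have hβ₁X : Integrable (fun ω => (1 - π ω) * β₁ ω * X ω) μ := by
    refine ((hW.mul_of_ae_mem_Icc hX (.of_forall hX01)).mul_of_ae_mem_Icc
      (aestronglyMeasurable_const.sub (hπ.mono hm).aestronglyMeasurable)
      (hπ01.mono fun _ => Set.Icc.mem_iff_one_sub_mem.mp)).congr (.of_forall fun ω => ?_)
    rcases hXbin ω with h | h <;> simp [h]
  have hβ₀X : Integrable (fun ω => π ω * β₀ ω * (1 - X ω)) μ := by
    refine ((hW.mul_of_ae_mem_Icc (aestronglyMeasurable_const.sub hX)
      (.of_forall fun ω => Set.Icc.mem_iff_one_sub_mem.mp (hX01 ω))).mul_of_ae_mem_Icc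
      (hπ.mono hm).aestronglyMeasurable hπ01).congr (.of_forall fun ω => ?_)
    rcases hXbin ω with h | h <;> simp [h]
  have hβ₁' : StronglyMeasurable[m] fun ω => (1 - π ω) * β₁ ω :=
    (stronglyMeasurable_const.sub hπ).mul hβ₁
  have hβ₀' : StronglyMeasurable[m] fun ω => π ω * β₀ ω := hπ.mul hβ₀
  have h1X : μ[fun ω => 1 - X ω|m] =ᵐ[μ] fun ω => 1 - π ω := condExp_one_sub hm hXint
  have hβ₀π : Integrable (fun ω => π ω * β₀ ω * (1 - π ω)) μ :=
    (integrable_mul_condExp_of_stronglyMeasurable hβ₀' hβ₀X h1Xint).congr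
      (h1X.mono fun ω h => by simp only [h])
  calc ∫ ω, (X ω - π ω) * ((β₁ ω - β₀ ω) * X ω + β₀ ω) ∂μ
      = ∫ ω, ((1 - π ω) * β₁ ω * X ω - π ω * β₀ ω * (1 - X ω)) ∂μ := by
        congr 1 with ω
        rcases hXbin ω with h | h <;> simp [h]
    _ = ∫ ω, ((1 - π ω) * β₁ ω * π ω - π ω * β₀ ω * (1 - π ω)) ∂μ := by
        rw [integral_sub hβ₁X hβ₀X, integral_sub
          (integrable_mul_condExp_of_stronglyMeasurable hβ₁' hβ₁X hXint) hβ₀π,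
          ← integral_mul_condExp_of_stronglyMeasurable hm hβ₁' hβ₁X hXint,
          ← integral_mul_condExp_of_stronglyMeasurable hm hβ₀' hβ₀X h1Xint]
        congr 1
        exact integral_congr_ae (h1X.mono fun ω h => by simp only [h])
    _ = ∫ ω, π ω * (1 - π ω) * (β₁ ω - β₀ ω) ∂μ := by
        congr 1 with ω
        ring

theorem integral_condCov_of_binary_of_partiallyLinear (hmm' : m ≤ m') (hm' : m' ≤ m₀)
    {Y β₀ β₁ : Ω → ℝ} (hX : StronglyMeasurable[m'] X)
    (hXbin : ∀ ω, X ω = 0 ∨ X ω = 1) (hY : MemLp Y 2 μ)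
    (hβ₀ : StronglyMeasurable[m] β₀) (hβ₁ : StronglyMeasurable[m] β₁)
    (hlin : μ[Y|m'] =ᵐ[μ] fun ω => (β₁ ω - β₀ ω) * X ω + β₀ ω) :
    ∫ ω, condCov μ m X Y ω ∂μ = ∫ ω, (μ[X|m]) ω * (1 - (μ[X|m]) ω) * (β₁ ω - β₀ ω) ∂μ := by
  have hm : m ≤ m₀ := hmm'.trans hm'
  have hXm₀ : AEStronglyMeasurable[m₀] X μ := (hX.mono hm').aestronglyMeasurable
  have hX2 : MemLp X 2 μ := memLp_of_binary hXm₀ hXbin 2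
  calc ∫ ω, condCov μ m X Y ω ∂μ
      = ∫ ω, (X ω - (μ[X|m]) ω) * Y ω ∂μ := integral_condCov hm hX2 hY
    _ = ∫ ω, (X ω - (μ[X|m]) ω) * (μ[Y|m']) ω ∂μ :=
        (integral_mul_condExp_of_stronglyMeasurable hm'
          (hX.sub (stronglyMeasurable_condExp.mono hmm'))
          ((hX2.sub (hX2.condExp one_le_two)).integrable_mul hY)
          (hY.integrable one_le_two)).symm
    _ = ∫ ω, (X ω - (μ[X|m]) ω) * ((β₁ ω - β₀ ω) * X ω + β₀ ω) ∂μ :=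
        integral_congr_ae (hlin.mono fun ω hω => by simp only [hω])
    _ = ∫ ω, (μ[X|m]) ω * (1 - (μ[X|m]) ω) * (β₁ ω - β₀ ω) ∂μ :=
        integral_mul_partiallyLinear_of_binary hm hXm₀ hXbin hβ₀ hβ₁
          (integrable_condExp.congr hlin)

end Binary

end ConditionalMoments

theorem binary_regressor_weights_general {Ω E : Type*} [MeasurableSpace Ω]
    [MeasurableSpace E] (μ : Measure Ω) [IsProbabilityMeasure μ]
    (X Y : Ω → ℝ) (Z : Ω → E)
    (hX : Measurable X) (hZ : Measurable Z)
    (hXbin : ∀ ω, X ω = 0 ∨ X ω = 1) (hY2 : MemLp Y 2 μ)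
    (b0 b1 : E → ℝ) (hb0 : Measurable b0) (hb1 : Measurable b1)
    (hlin : (μ[Y|MeasurableSpace.comap (fun ω => (X ω, Z ω)) inferInstance]) =ᵐ[μ]
      fun ω => (b1 (Z ω) - b0 (Z ω)) * X ω + b0 (Z ω))
    -- `π(Z) = P(X = 1 | Z) = E[X | Z]` for a `{0,1}`-valued regressor
    (π : Ω → ℝ) (hπ : π = μ[X|MeasurableSpace.comap Z inferInstance]) :
    (∫ ω, condCov μ (MeasurableSpace.comap Z inferInstance) X Y ω ∂μ) /
        (∫ ω, condVar μ (MeasurableSpace.comap Z inferInstance) X ω ∂μ) =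
      ∫ ω, (π ω * (1 - π ω) / (∫ ω', π ω' * (1 - π ω') ∂μ)) *
        (b1 (Z ω) - b0 (Z ω)) ∂μ := by
  have hXZ_le :
      MeasurableSpace.comap (fun ω => (X ω, Z ω)) inferInstance ≤ ‹MeasurableSpace Ω› :=
    (hX.prodMk hZ).comap_le
  have hpair : Measurable[MeasurableSpace.comap (fun ω => (X ω, Z ω)) inferInstance]
      fun ω => (X ω, Z ω) :=
    comap_measurable _
  have hZ_le_XZ : MeasurableSpace.comap Z inferInstance ≤
      MeasurableSpace.comap (fun ω => (X ω, Z ω)) inferInstance :=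
    (measurable_snd.comp hpair).comap_le
  have hX_XZ : Measurable[MeasurableSpace.comap (fun ω => (X ω, Z ω)) inferInstance] X :=
    measurable_fst.comp hpair
  have hb_Z : ∀ b : E → ℝ, Measurable b →
      StronglyMeasurable[MeasurableSpace.comap Z inferInstance] fun ω => b (Z ω) :=
    fun _ hb => (hb.comp (comap_measurable Z)).stronglyMeasurable
  rw [integral_condCov_of_binary_of_partiallyLinear hZ_le_XZ hXZ_le hX_XZ.stronglyMeasurable
      hXbin hY2 (hb_Z b0 hb0) (hb_Z b1 hb1) hlin,
    integral_condVar_of_binary (hZ_le_XZ.trans hXZ_le) hX.aestronglyMeasurable hXbin, ← hπ,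
    ← integral_div]
  congr 1 with ω
  ring

theorem binary_regressor_weights {Ω E : Type*} [MeasurableSpace Ω]
    [MeasurableSpace E] (μ : Measure Ω) [IsProbabilityMeasure μ]
    (X Y : Ω → ℝ) (Z : Ω → E)
    (hX : Measurable X) (hY : Measurable Y) (hZ : Measurable Z)
    (hXbin : ∀ ω, X ω = 0 ∨ X ω = 1) (hY2 : MemLp Y 2 μ)
    (b0 b1 : E → ℝ) (hb0 : Measurable b0) (hb1 : Measurable b1)
    (hlin : (μ[Y|MeasurableSpace.comap (fun ω => (X ω, Z ω)) inferInstance]) =ᵐ[μ]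
      fun ω => (b1 (Z ω) - b0 (Z ω)) * X ω + b0 (Z ω))
    -- `π(Z) = P(X = 1 | Z) = E[X | Z]` for a `{0,1}`-valued regressor
    (π : Ω → ℝ) (hπ : π = μ[X|MeasurableSpace.comap Z inferInstance])
    (hC : 0 < ∫ ω, π ω * (1 - π ω) ∂μ) :
    (∫ ω, condCov μ (MeasurableSpace.comap Z inferInstance) X Y ω ∂μ) /
        (∫ ω, condVar μ (MeasurableSpace.comap Z inferInstance) X ω ∂μ) =
      ∫ ω, (π ω * (1 - π ω) / (∫ ω', π ω' * (1 - π ω') ∂μ)) *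
        (b1 (Z ω) - b0 (Z ω)) ∂μ :=
  binary_regressor_weights_general μ X Y Z hX hZ hXbin hY2 b0 b1 hb0 hb1 hlin π hπ
end
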